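/- Let n ≥ 2k ≥ 4, 4 ≤ b ≤ k+1, and let d ≥ 1 with d ≤ n − 2 (X ⊆ [2,n], |X| = d). Then the quantity [C(n−b, k−b+1) − C(n−b−d, k−b+1)] − [C(n−b, k−1) − C(n−b−d, k−1)] is nonpositive. Equivalently, for A = F([2,b]) ∪ F({1,b}) and any X ⊆ [2,n] with |X| = d disjoint from [2,b], |A(X)| ≤ |S(X)| where S is the star family {S ∈ C([n],k) : 1 ∈ S} and A(X) = {A ∈ A : A ∩ X ≠ ∅}. -/

import Mathlib

/-- The `i`-th smallest element (0-indexed) of a finite set of naturals. -/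
def nth (A : Finset ℕ) (i : ℕ) : ℕ := (A.sort (· ≤ ·)).getD i 0

/-! Split both families according to whether `1 ∈ S`. The members of
`A = F([2,b]) ∪ F({1,b})` containing `1` are exactly the star members meeting `[2,b]`, so only the
rest has to be compared: the members of `A` avoiding `1` are `[2,b] ∪ T` with `T` a
`(k+1-b)`-subset of `V = [b+1,n]`, and the star members avoiding `[2,b]` are `{1} ∪ T` with `T`
a `(k-1)`-subset of `V`. Since `X ⊆ V`, the sets `T` meeting `X` number `C(|V|,a) - C(|V|-d,a)`,
so it remains to see that `m ↦ C(m,c) - C(m,a)` is nondecreasing from `m = |V| - d` to `|V|`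
whenever `a ≤ c` and `a + c ≤ |V|`. By Pascal's rule its increment is
`C(m,c-1) - C(m,a-1) ≥ 0` by unimodality once `m ≥ a + c`; if instead `|V| - d < a + c`,
symmetry gives `C(|V|-d,c) ≤ C(|V|-d,a)` while unimodality gives `C(|V|,a) ≤ C(|V|,c)`. -/

open Finset

namespace Nat

lemma choose_le_choose_of_le_half {m a c : ℕ} (hac : a ≤ c) (hc : c ≤ m / 2) :
    m.choose a ≤ m.choose c := by
  induction c, hac using Nat.le_induction with
  | base => rfl
  | succ c _ ih => exact (ih (by omega)).trans (choose_le_succ_of_lt_half_left (by omega))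

lemma choose_le_choose_of_add_le {m a c : ℕ} (hac : a ≤ c) (h : a + c ≤ m) :
    m.choose a ≤ m.choose c := by
  rcases le_total c (m - c) with hc | hc
  · exact choose_le_choose_of_le_half hac (by omega)
  · rw [← choose_symm (by omega : c ≤ m)]
    exact choose_le_choose_of_le_half (by omega) (by omega)

lemma choose_le_choose_of_lt_add {m a c : ℕ} (hac : a ≤ c) (h : m < a + c) :
    m.choose c ≤ m.choose a := by
  rcases lt_or_ge m c with hmc | hcm
  · simp [choose_eq_zero_of_lt hmc]
  · rw [← choose_symm hcm]
    exact choose_le_choose_of_add_le (by omega) (by omega)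

lemma choose_add_choose_succ_le {m a c : ℕ} (hac : a ≤ c) (h : a + c ≤ m) :
    (m + 1).choose a + m.choose c ≤ m.choose a + (m + 1).choose c := by
  rcases a with _ | a
  · simpa using choose_le_succ m c
  obtain ⟨c, rfl⟩ : ∃ c', c = c' + 1 := ⟨c - 1, by omega⟩
  have : m.choose a ≤ m.choose c := choose_le_choose_of_add_le (by omega) (by omega)
  rw [choose_succ_succ', choose_succ_succ']
  omega

lemma choose_add_choose_le_choose_add_choose {m m' a c : ℕ} (hm : m' ≤ m) (hac : a ≤ c)
    (h : a + c ≤ m) : m.choose a + m'.choose c ≤ m.choose c + m'.choose a := by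
  rcases lt_or_ge m' (a + c) with hm' | hm'
  · have := choose_le_choose_of_lt_add hac hm'
    have := choose_le_choose_of_add_le hac h
    omega
  · clear h
    induction m, hm using Nat.le_induction with
    | base => omega
    | succ m hm ih =>
      have := choose_add_choose_succ_le (m := m) hac (by omega)
      omega

end Nat

section nth

variable {S : Finset ℕ} {j : ℕ}

lemma nth_eq_orderEmbOfFin (hj : j < #S) : nth S j = S.orderEmbOfFin rfl ⟨j, hj⟩ :=
  List.getD_eq_getElem _ _ _

lemma nth_mem (hj : j < #S) : nth S j ∈ S := by
  rw [nth_eq_orderEmbOfFin hj]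
  exact orderEmbOfFin_mem _ _ _

lemma lt_card_filter_le_of_nth_le {v : ℕ} (hj : j < #S) (h : nth S j ≤ v) :
    j < #{x ∈ S | x ≤ v} := by
  set f := S.orderEmbOfFin rfl
  have hsub : (Iic (⟨j, hj⟩ : Fin #S)).map f.toEmbedding ⊆ {x ∈ S | x ≤ v} := by
    intro x hx
    obtain ⟨i, hi, rfl⟩ := mem_map.mp hx
    rw [nth_eq_orderEmbOfFin hj] at h
    exact mem_filter.mpr ⟨orderEmbOfFin_mem _ _ _, (f.monotone (mem_Iic.mp hi)).trans h⟩
  simpa using card_le_card hsub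

lemma inter_Icc_nonempty_of_nth_one_le {v : ℕ} (h0 : 0 ∉ S) (hS : 2 ≤ #S)
    (h : nth S 1 ≤ v) :
    (S ∩ Icc 2 v).Nonempty := by
  obtain ⟨x, hx, y, hy, hxy⟩ := one_lt_card.mp (lt_card_filter_le_of_nth_le (by omega) h)
  simp only [mem_filter] at hx hy
  obtain ⟨z, hzS, hzv, hz1⟩ : ∃ z ∈ S, z ≤ v ∧ z ≠ 1 := by
    rcases eq_or_ne x 1 with rfl | hx1
    · exact ⟨y, hy.1, hy.2, Ne.symm hxy⟩
    · exact ⟨x, hx.1, hx.2, hx1⟩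
  have hz0 : z ≠ 0 := fun h => h0 (h ▸ hzS)
  exact ⟨z, mem_inter.mpr ⟨hzS, mem_Icc.mpr ⟨by omega, hzv⟩⟩⟩

lemma Icc_subset_of_nth_le {b : ℕ} (h0 : 0 ∉ S) (h1 : 1 ∉ S) (hb : 2 ≤ b)
    (hbS : b ≤ #S + 1)
    (h : nth S (b - 2) ≤ b) : Icc 2 b ⊆ S := by
  have hsub : {x ∈ S | x ≤ b} ⊆ Icc 2 b := by
    intro x hx
    obtain ⟨hxS, hxb⟩ := mem_filter.mp hx
    have : x ≠ 0 := fun h => h0 (h ▸ hxS)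
    have : x ≠ 1 := fun h => h1 (h ▸ hxS)
    exact mem_Icc.mpr ⟨by omega, hxb⟩
  have hcard : #(Icc 2 b) ≤ #{x ∈ S | x ≤ b} := by
    have := lt_card_filter_le_of_nth_le (by omega) h
    simp only [Nat.card_Icc]
    omega
  rw [← eq_of_subset_of_card_le hsub hcard]
  exact filter_subset _ _

lemma one_mem_inter_Icc_nonempty_or_Icc_subset {b : ℕ} (h0 : 0 ∉ S) (hb : 3 ≤ b)
    (hbS : b ≤ #S + 1)
    (h : (∀ j < b - 1, nth S j ≤ j + 2) ∨ (nth S 0 = 1 ∧ nth S 1 ≤ b)) :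
    (1 ∈ S ∧ (S ∩ Icc 2 b).Nonempty) ∨ (1 ∉ S ∧ Icc 2 b ⊆ S) := by
  by_cases h1 : 1 ∈ S
  · refine Or.inl ⟨h1, inter_Icc_nonempty_of_nth_one_le h0 (by omega) ?_⟩
    rcases h with h | h
    · exact (h 1 (by omega)).trans (by omega)
    · exact h.2
  · refine Or.inr ⟨h1, ?_⟩
    rcases h with h | h
    · exact Icc_subset_of_nth_le h0 h1 (by omega) hbS ((h (b - 2) (by omega)).trans (by omega))
    · exact absurd (h.1 ▸ nth_mem (by omega)) h1

end nth

section meets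

variable {α : Type*} [DecidableEq α] {U X : Finset α}

lemma card_powersetCard_filter_inter_nonempty_add (hXU : X ⊆ U) (a : ℕ) :
    #{T ∈ U.powersetCard a | (T ∩ X).Nonempty} + (#U - #X).choose a = (#U).choose a := by
  have hcompl : {T ∈ U.powersetCard a | ¬(T ∩ X).Nonempty} = (U \ X).powersetCard a := by
    ext T
    simp only [mem_filter, mem_powersetCard, subset_sdiff, not_nonempty_iff_eq_empty,
      ← disjoint_iff_inter_eq_empty]
    tauto
  rw [← card_sdiff_of_subset hXU, ← card_powersetCard, ← card_powersetCard, ← hcompl,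
    card_filter_add_card_filter_not]

lemma card_powersetCard_filter_inter_nonempty_le (hXU : X ⊆ U) {a c : ℕ} (hac : a ≤ c)
    (h : a + c ≤ #U) :
    #{T ∈ U.powersetCard a | (T ∩ X).Nonempty}
      ≤ #{T ∈ U.powersetCard c | (T ∩ X).Nonempty} := by
  have := card_powersetCard_filter_inter_nonempty_add hXU a
  have := card_powersetCard_filter_inter_nonempty_add hXU c
  have := Nat.choose_add_choose_le_choose_add_choose (Nat.sub_le #U #X) hac h
  omega

end meets

section star

variable {n b k : ℕ} {X : Finset ℕ}

lemma card_filter_Icc_subset_le (hb : 1 ≤ b) (hX : Disjoint X (Icc 2 b)) :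
    #{S ∈ (Icc 1 n).powerset | #S = k ∧ 1 ∉ S ∧ Icc 2 b ⊆ S ∧ (S ∩ X).Nonempty}
      ≤ #{T ∈ (Icc (b + 1) n).powersetCard (k + 1 - b) | (T ∩ X).Nonempty} := by
  refine card_le_card_of_injOn (· \ Icc 2 b) (fun S hS => ?_) (fun S hS S' hS' h => ?_)
  · simp only [mem_coe, mem_filter, mem_powerset] at hS
    obtain ⟨hSn, hSk, hS1, hbS, x, hx⟩ := hS
    simp only [mem_coe, mem_filter, mem_powersetCard]
    refine ⟨⟨fun y hy => ?_, ?_⟩, x, ?_⟩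
    · have := hSn (mem_sdiff.mp hy).1
      grind
    · rw [card_sdiff_of_subset hbS, hSk, Nat.card_Icc]
      omega
    · obtain ⟨hxS, hxX⟩ := mem_inter.mp hx
      exact mem_inter.mpr ⟨mem_sdiff.mpr ⟨hxS, disjoint_left.mp hX hxX⟩, hxX⟩
  · simp only [mem_coe, mem_filter, mem_powerset] at hS hS'
    simpa only [sdiff_union_of_subset hS.2.2.2.1, sdiff_union_of_subset hS'.2.2.2.1]
      using congrArg (· ∪ Icc 2 b) h

lemma card_filter_powersetCard_le_card_filter_one_mem (hb : 1 ≤ b) (hk : 1 ≤ k) :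
    #{T ∈ (Icc (b + 1) n).powersetCard (k - 1) | (T ∩ X).Nonempty}
      ≤ #{S ∈ {S ∈ (Icc 1 n).powerset | #S = k ∧ 1 ∈ S ∧ (S ∩ X).Nonempty} |
          ¬(S ∩ Icc 2 b).Nonempty} := by
  have h1 : ∀ T ⊆ Icc (b + 1) n, 1 ∉ T := fun T hT h => by
    have := mem_Icc.mp (hT h)
    omega
  refine card_le_card_of_injOn (insert 1) (fun T hT => ?_) (fun T hT T' hT' h => ?_)
  · simp only [mem_coe, mem_filter, mem_powersetCard] at hT
    obtain ⟨⟨hTV, hTk⟩, x, hx⟩ := hT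
    simp only [mem_coe, mem_filter, mem_powerset]
    refine ⟨⟨?_, ?_, mem_insert_self 1 T, x, ?_⟩, ?_⟩
    · have := hTV (mem_inter.mp hx).1
      grind
    · rw [card_insert_of_notMem (h1 T hTV), hTk]
      omega
    · grind
    · rintro ⟨y, hy⟩
      grind
  · simp only [mem_coe, mem_filter, mem_powersetCard] at hT hT'
    rw [← erase_insert (h1 T hT.1.1), h, erase_insert (h1 T' hT'.1.1)]

lemma filter_nth_subset_union (hb : 3 ≤ b) (hbk : b ≤ k + 1) :
    {S ∈ (Icc 1 n).powerset | #S = k ∧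
        ((∀ j < b - 1, nth S j ≤ j + 2) ∨ (nth S 0 = 1 ∧ nth S 1 ≤ b)) ∧
        (S ∩ X).Nonempty}
      ⊆ {S ∈ {S ∈ (Icc 1 n).powerset | #S = k ∧ 1 ∈ S ∧ (S ∩ X).Nonempty} |
          (S ∩ Icc 2 b).Nonempty}
        ∪ {S ∈ (Icc 1 n).powerset |
            #S = k ∧ 1 ∉ S ∧ Icc 2 b ⊆ S ∧ (S ∩ X).Nonempty} := by
  intro S hS
  obtain ⟨hSn, hSk, hSb, hSX⟩ := by simpa only [mem_filter, mem_powerset] using hS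
  have h0 : 0 ∉ S := fun h => by simpa using hSn h
  rcases one_mem_inter_Icc_nonempty_or_Icc_subset h0 hb (by omega) hSb with
    ⟨h1, hSb⟩ | ⟨h1, hSb⟩
  · exact mem_union_left _ <|
      mem_filter.mpr ⟨mem_filter.mpr ⟨mem_powerset.mpr hSn, hSk, h1, hSX⟩, hSb⟩
  · exact mem_union_right _ <| mem_filter.mpr ⟨mem_powerset.mpr hSn, hSk, h1, hSb, hSX⟩

end star

theorem stmt_17_general (n k b d : ℕ) (hn : 2 * k ≤ n)
    (hb : 4 ≤ b) (hbk : b ≤ k + 1) :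
    (Nat.choose (n - b) (k + 1 - b) + Nat.choose (n - b - d) (k - 1)
      ≤ Nat.choose (n - b) (k - 1) + Nat.choose (n - b - d) (k + 1 - b))
    ∧ ∀ X : Finset ℕ, X ⊆ Finset.Icc 2 n → X.card = d →
        X ∩ Finset.Icc 2 b = ∅ →
        ((Finset.Icc 1 n).powerset.filter
          (fun S => S.card = k ∧
            ((∀ j < b - 1, nth S j ≤ j + 2) ∨ (nth S 0 = 1 ∧ nth S 1 ≤ b)) ∧
            (S ∩ X).Nonempty)).card
        ≤ ((Finset.Icc 1 n).powerset.filter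
            (fun S => S.card = k ∧ 1 ∈ S ∧ (S ∩ X).Nonempty)).card := by
  refine ⟨Nat.choose_add_choose_le_choose_add_choose (by omega) (by omega) (by omega),
    fun X hXn _ hXb => ?_⟩
  have hXb : Disjoint X (Icc 2 b) := disjoint_iff_inter_eq_empty.mpr hXb
  have hXV : X ⊆ Icc (b + 1) n := fun x hx => by
    have := mem_Icc.mp (hXn hx)
    have := disjoint_left.mp hXb hx
    grind
  set R := {S ∈ (Icc 1 n).powerset | #S = k ∧ 1 ∈ S ∧ (S ∩ X).Nonempty}
  calc _ ≤ #{S ∈ R | (S ∩ Icc 2 b).Nonempty}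
        + #{S ∈ (Icc 1 n).powerset |
            #S = k ∧ 1 ∉ S ∧ Icc 2 b ⊆ S ∧ (S ∩ X).Nonempty} :=
        (card_le_card (filter_nth_subset_union (by omega) hbk)).trans (card_union_le _ _)
    _ ≤ #{S ∈ R | (S ∩ Icc 2 b).Nonempty}
        + #{T ∈ (Icc (b + 1) n).powersetCard (k + 1 - b) | (T ∩ X).Nonempty} :=
        Nat.add_le_add_left (card_filter_Icc_subset_le (by omega) hXb) _
    _ ≤ #{S ∈ R | (S ∩ Icc 2 b).Nonempty}
        + #{T ∈ (Icc (b + 1) n).powersetCard (k - 1) | (T ∩ X).Nonempty} := by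
        refine Nat.add_le_add_left (card_powersetCard_filter_inter_nonempty_le hXV ?_ ?_) _
        · omega
        · simp only [Nat.card_Icc]
          omega
    _ ≤ #{S ∈ R | (S ∩ Icc 2 b).Nonempty} + #{S ∈ R | ¬(S ∩ Icc 2 b).Nonempty} :=
        Nat.add_le_add_left
          (card_filter_powersetCard_le_card_filter_one_mem (by omega) (by omega)) _
    _ = #R := card_filter_add_card_filter_not _

/-- [C(n-b,k-b+1) - C(n-b-d,k-b+1)] - [C(n-b,k-1) - C(n-b-d,k-1)] ≤ 0
(stated subtraction-free over ℕ), and consequently |A(X)| ≤ |S(X)| for every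
X ⊆ [2,n] with |X| = d disjoint from [2,b], where A = F([2,b]) ∪ F(1,b)
and S is the star. -/
theorem stmt_17 (n k b d : ℕ) (hn : 2 * k ≤ n) (hk : 2 ≤ k)
    (hb : 4 ≤ b) (hbk : b ≤ k + 1) (hd : 1 ≤ d) (hdn : d ≤ n - 2) :
    (Nat.choose (n - b) (k + 1 - b) + Nat.choose (n - b - d) (k - 1)
      ≤ Nat.choose (n - b) (k - 1) + Nat.choose (n - b - d) (k + 1 - b))
    ∧ ∀ X : Finset ℕ, X ⊆ Finset.Icc 2 n → X.card = d →
        X ∩ Finset.Icc 2 b = ∅ →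
        ((Finset.Icc 1 n).powerset.filter
          (fun S => S.card = k ∧
            ((∀ j < b - 1, nth S j ≤ j + 2) ∨ (nth S 0 = 1 ∧ nth S 1 ≤ b)) ∧
            (S ∩ X).Nonempty)).card
        ≤ ((Finset.Icc 1 n).powerset.filter
            (fun S => S.card = k ∧ 1 ∈ S ∧ (S ∩ X).Nonempty)).card :=
  stmt_17_general n k b d hn hb hbk
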